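/- For every integer r ≥ 3 and k ≥ 1, every family of distinct k-element sets with VC-dimension at most 1 and cardinality at least r^{10k} contains an r-sunflower. -/

import Mathlib

open Finset

variable {α : Type*}

/-- An `r`-sunflower: `r` distinct sets with pairwise equal intersections. -/
def IsSunflower [DecidableEq α] (r : ℕ) (𝒮 : Finset (Finset α)) : Prop :=
  𝒮.card = r ∧ ∃ C : Finset α, ∀ A ∈ 𝒮, ∀ B ∈ 𝒮, A ≠ B → A ∩ B = C

/-- The family `F` contains an `r`-sunflower. -/
def HasSunflower [DecidableEq α] (F : Finset (Finset α)) (r : ℕ) : Prop :=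
  ∃ 𝒮 ⊆ F, IsSunflower r 𝒮

/-- `F` shatters `S`: every subset of `S` is the trace of some member of `F` on `S`. -/
def ShattersFam [DecidableEq α] (F : Finset (Finset α)) (S : Finset α) : Prop :=
  ∀ B ⊆ S, ∃ A ∈ F, A ∩ S = B

/-- The VC-dimension of `F` is at most `d`. -/
def VCdimLE [DecidableEq α] (F : Finset (Finset α)) (d : ℕ) : Prop :=
  ∀ S : Finset α, ShattersFam F S → S.card ≤ d

/-- The Littlestone dimension of `F` is at most `d` (recursive definition). -/
def LdimLE [DecidableEq α] : ℕ → Finset (Finset α) → Prop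
  | 0, F => F.card ≤ 1
  | d + 1, F => F.card ≤ 1 ∨ ∀ x : α,
      LdimLE d ((F.filter (fun S => x ∈ S)).image (fun S => S.erase x)) ∨
      LdimLE d (F.filter (fun S => x ∉ S))

/-- `λ(G) ≥ l`: there are `l` distinct sets in `G` such that every pair has a
private common element, belonging to no other of the `l` sets. -/
def HasLambda [DecidableEq α] (G : Finset (Finset α)) (l : ℕ) : Prop :=
  ∃ S : Fin l → Finset α, (∀ i, S i ∈ G) ∧ Function.Injective S ∧
    ∀ i j : Fin l, i < j → ∃ v, v ∈ S i ∧ v ∈ S j ∧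
      ∀ t : Fin l, t ≠ i → t ≠ j → v ∉ S t

/-!
We prove the sharper bound `(r - 1) ^ k < |F|` by induction on `k`. If `F` has no `r` pairwise
disjoint members, it has a transversal of at most `r - 1` points. Indeed, if two points `x, y` of a
common member have incomparable stars, then the traces `{x, y}`, `{x}`, `{y}` on `{x, y}` all
occur, so VC-dimension `1` forbids the trace `∅` and `{x, y}` is a transversal. Otherwise the stars
of the points of any member form a chain, so each member `S` of a maximal disjoint subfamily has a
point lying in every member that meets `S`. By pigeonhole some point `x` lies in more than
`(r - 1) ^ (k - 1)` members, and a sunflower in the link `F.memberSubfamily x` lifts to `F`.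
-/

section

variable [DecidableEq α]

lemma Finset.card_memberSubfamily (x : α) (F : Finset (Finset α)) :
    #(F.memberSubfamily x) = #{A ∈ F | x ∈ A} :=
  card_image_of_injOn <| (erase_injOn' x).mono fun _ hA => (mem_filter.mp hA).2

lemma Finset.card_eq_of_mem_memberSubfamily {F : Finset (Finset α)} {x : α} {k : ℕ}
    (hF : ∀ A ∈ F, #A = k + 1) {A : Finset α} (hA : A ∈ F.memberSubfamily x) : #A = k := by
  rw [mem_memberSubfamily] at hA
  have h := hF _ hA.1
  rw [card_insert_of_notMem hA.2] at h
  omega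

lemma HasSunflower.of_memberSubfamily {F : Finset (Finset α)} {x : α} {r : ℕ}
    (h : HasSunflower (F.memberSubfamily x) r) : HasSunflower F r := by
  obtain ⟨𝒮, h𝒮, hcard, C, hC⟩ := h
  have hx : ∀ A ∈ 𝒮, x ∉ A := fun A hA => (mem_memberSubfamily.mp (h𝒮 hA)).2
  refine ⟨𝒮.image (insert x), ?_, ?_, insert x C, ?_⟩
  · exact image_subset_iff.mpr fun A hA => (mem_memberSubfamily.mp (h𝒮 hA)).1
  · rw [card_image_of_injOn, hcard]
    intro A hA B hB hAB
    rw [← erase_insert (hx A hA), ← erase_insert (hx B hB)]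
    exact congrArg (erase · x) hAB
  · simp only [mem_image]
    rintro _ ⟨A, hA, rfl⟩ _ ⟨B, hB, rfl⟩ hne
    rw [← insert_inter_distrib, hC A hA B hB (by rintro rfl; exact hne rfl)]

lemma VCdimLE.memberSubfamily {F : Finset (Finset α)} {d : ℕ} (h : VCdimLE F d) (x : α) :
    VCdimLE (F.memberSubfamily x) d := by
  intro S hS
  by_cases hxS : x ∈ S
  · obtain ⟨A, hA, hAS⟩ := hS S Subset.rfl
    exact absurd (inter_eq_right.mp hAS hxS) (mem_memberSubfamily.mp hA).2
  · refine h S fun B hB => ?_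
    obtain ⟨A, hA, rfl⟩ := hS B hB
    exact ⟨insert x A, (mem_memberSubfamily.mp hA).1, insert_inter_of_notMem hxS⟩

lemma shattersFam_of_forall_mem_iff {F : Finset (Finset α)} {S : Finset α}
    (h : ∀ B ⊆ S, ∃ A ∈ F, ∀ z ∈ S, z ∈ A ↔ z ∈ B) : ShattersFam F S := by
  intro B hB
  obtain ⟨A, hA, hAB⟩ := h B hB
  refine ⟨A, hA, ext fun z => ?_⟩
  rw [mem_inter]
  exact ⟨fun ⟨hzA, hzS⟩ => (hAB z hzS).mp hzA, fun hzB => ⟨(hAB z (hB hzB)).mpr hzB, hB hzB⟩⟩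

lemma hasSunflower_of_pairwiseDisjoint {F 𝒮 : Finset (Finset α)} {r : ℕ} (h𝒮F : 𝒮 ⊆ F)
    (h𝒮 : (𝒮 : Set (Finset α)).PairwiseDisjoint id) (hr : r ≤ #𝒮) : HasSunflower F r := by
  obtain ⟨𝒯, h𝒯𝒮, h𝒯⟩ := exists_subset_card_eq hr
  exact ⟨𝒯, h𝒯𝒮.trans h𝒮F, h𝒯, ∅, fun A hA B hB hAB =>
    disjoint_iff_inter_eq_empty.mp (h𝒮 (h𝒯𝒮 hA) (h𝒯𝒮 hB) hAB)⟩

lemma exists_pairwiseDisjoint_subset_forall_not_disjoint (F : Finset (Finset α)) :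
    ∃ 𝒮 ⊆ F, (𝒮 : Set (Finset α)).PairwiseDisjoint id ∧
      ∀ A ∈ F, A.Nonempty → ∃ S ∈ 𝒮, ¬Disjoint S A := by
  induction F using Finset.induction_on with
  | empty => exact ⟨∅, Subset.rfl, by simp, by simp⟩
  | insert A F _ ih =>
    obtain ⟨𝒮, h𝒮F, h𝒮, hmeet⟩ := ih
    simp only [mem_insert, forall_eq_or_imp]
    by_cases hA : ∃ S ∈ 𝒮, ¬Disjoint S A
    · exact ⟨𝒮, h𝒮F.trans (subset_insert _ _), h𝒮, fun _ => hA, hmeet⟩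
    · push Not at hA
      refine ⟨insert A 𝒮, insert_subset_insert _ h𝒮F, ?_, ?_, ?_⟩
      · rw [coe_insert]
        exact h𝒮.insert fun S hS _ => (hA S hS).symm
      · exact fun hne => ⟨A, mem_insert_self _ _, by simpa using hne.ne_empty⟩
      · intro B hB hne
        obtain ⟨S, hS, hSB⟩ := hmeet B hB hne
        exact ⟨S, mem_insert_of_mem hS, hSB⟩

def IsTransversal (X : Finset α) (F : Finset (Finset α)) : Prop :=
  ∀ A ∈ F, ∃ x ∈ X, x ∈ A

lemma IsTransversal.exists_lt_card_filter_mem {X : Finset α} {F : Finset (Finset α)}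
    (hX : IsTransversal X F) {n : ℕ} (h : #X * n < #F) : ∃ x ∈ X, n < #{A ∈ F | x ∈ A} := by
  apply exists_lt_of_sum_lt
  calc ∑ _x ∈ X, n = #X * n := by rw [sum_const, smul_eq_mul]
    _ < #F := h
    _ ≤ #(X.biUnion fun x => {A ∈ F | x ∈ A}) := card_le_card fun A hA => by
      obtain ⟨x, hx, hxA⟩ := hX A hA
      exact mem_biUnion.mpr ⟨x, hx, mem_filter.mpr ⟨hA, hxA⟩⟩
    _ ≤ ∑ x ∈ X, #{A ∈ F | x ∈ A} := card_biUnion_le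

lemma isTransversal_pair_of_not_subset {F : Finset (Finset α)} (hvc : VCdimLE F 1)
    {x y : α} {A : Finset α} (hA : A ∈ F) (hx : x ∈ A) (hy : y ∈ A)
    (hxy : ¬{B ∈ F | x ∈ B} ⊆ {B ∈ F | y ∈ B}) (hyx : ¬{B ∈ F | y ∈ B} ⊆ {B ∈ F | x ∈ B}) :
    IsTransversal {x, y} F := by
  obtain ⟨Bx, hBx, hyBx⟩ := not_subset.mp hxy
  obtain ⟨By, hBy, hxBy⟩ := not_subset.mp hyx
  simp only [mem_filter, not_and] at hBx hyBx hBy hxBy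
  have hne : x ≠ y := by rintro rfl; exact hyBx hBx.1 hBx.2
  by_contra hmiss
  obtain ⟨T, hT, hxT, hyT⟩ : ∃ T ∈ F, x ∉ T ∧ y ∉ T := by
    simpa [IsTransversal] using hmiss
  have hshatter : ShattersFam F {x, y} := by
    refine shattersFam_of_forall_mem_iff fun B _ => ?_
    simp only [mem_insert, mem_singleton, forall_eq_or_imp, forall_eq]
    by_cases hxB : x ∈ B <;> by_cases hyB : y ∈ B
    exacts [⟨A, hA, by simp [*]⟩, ⟨Bx, hBx.1, by simp [*]⟩, ⟨By, hBy.1, by simp [*]⟩,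
      ⟨T, hT, by simp [*]⟩]
  have := hvc _ hshatter
  rw [card_pair hne] at this
  omega

lemma exists_subset_filter_mem_of_nested {F : Finset (Finset α)} {S : Finset α}
    (hS : S.Nonempty) (hnest : ∀ x ∈ S, ∀ y ∈ S,
      {A ∈ F | x ∈ A} ⊆ {A ∈ F | y ∈ A} ∨ {A ∈ F | y ∈ A} ⊆ {A ∈ F | x ∈ A}) :
    ∃ x ∈ S, ∀ y ∈ S, {A ∈ F | y ∈ A} ⊆ {A ∈ F | x ∈ A} := by
  obtain ⟨x, hx, hmax⟩ := S.exists_max_image (fun x => #{A ∈ F | x ∈ A}) hS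
  refine ⟨x, hx, fun y hy => ?_⟩
  rcases hnest y hy x hx with h | h
  · exact h
  · exact (eq_of_subset_of_card_le h (hmax y hy)).ge

lemma exists_transversal_card_le {F : Finset (Finset α)} {r : ℕ} (hr : 3 ≤ r)
    (hvc : VCdimLE F 1) (hne : ∀ A ∈ F, A.Nonempty) (hF : ¬HasSunflower F r) :
    ∃ X : Finset α, #X ≤ r - 1 ∧ IsTransversal X F := by
  by_cases hnest : ∀ A ∈ F, ∀ x ∈ A, ∀ y ∈ A,
      {B ∈ F | x ∈ B} ⊆ {B ∈ F | y ∈ B} ∨ {B ∈ F | y ∈ B} ⊆ {B ∈ F | x ∈ B}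
  · obtain ⟨𝒮, h𝒮F, h𝒮, hmeet⟩ := exists_pairwiseDisjoint_subset_forall_not_disjoint F
    have h𝒮card : #𝒮 ≤ r - 1 := by
      by_contra! h
      exact hF (hasSunflower_of_pairwiseDisjoint h𝒮F h𝒮 (by omega))
    choose top htop using fun S (hS : S ∈ 𝒮) =>
      exists_subset_filter_mem_of_nested (hne S (h𝒮F hS)) (hnest S (h𝒮F hS))
    refine ⟨𝒮.attach.image fun S => top S.1 S.2, card_image_le.trans (card_attach.trans_le h𝒮card),
      fun A hA => ?_⟩
    obtain ⟨S, hS, hSA⟩ := hmeet A hA (hne A hA)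
    obtain ⟨z, hzS, hzA⟩ := not_disjoint_iff.mp hSA
    exact ⟨top S hS, mem_image_of_mem _ (mem_attach _ ⟨S, hS⟩),
      (mem_filter.mp ((htop S hS).2 z hzS (mem_filter.mpr ⟨hA, hzA⟩))).2⟩
  · push Not at hnest
    obtain ⟨A, hA, x, hx, y, hy, hxy, hyx⟩ := hnest
    exact ⟨{x, y}, card_le_two.trans (by omega),
      isTransversal_pair_of_not_subset hvc hA hx hy hxy hyx⟩

theorem hasSunflower_of_pow_lt_card {r : ℕ} (hr : 3 ≤ r) (k : ℕ) {F : Finset (Finset α)}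
    (hF : ∀ A ∈ F, #A = k) (hvc : VCdimLE F 1) (hcard : (r - 1) ^ k < #F) :
    HasSunflower F r := by
  induction k generalizing F with
  | zero =>
    have : #F ≤ 1 := card_le_one.mpr fun A hA B hB => by
      rw [card_eq_zero.mp (hF A hA), card_eq_zero.mp (hF B hB)]
    rw [pow_zero] at hcard
    omega
  | succ k ih =>
    by_contra hsf
    obtain ⟨X, hXcard, hX⟩ := exists_transversal_card_le hr hvc
      (fun A hA => card_pos.mp (by rw [hF A hA]; omega)) hsf
    obtain ⟨x, -, hx⟩ := hX.exists_lt_card_filter_mem <|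
      calc #X * (r - 1) ^ k ≤ (r - 1) * (r - 1) ^ k := by gcongr
        _ = (r - 1) ^ (k + 1) := (pow_succ' _ _).symm
        _ < #F := hcard
    rw [← card_memberSubfamily] at hx
    exact hsf (ih (fun A hA => card_eq_of_mem_memberSubfamily hF hA)
      (hvc.memberSubfamily x) hx).of_memberSubfamily

end

theorem vc_one_sunflower {α : Type*} [DecidableEq α] (k r : ℕ) (hr : 3 ≤ r)
    (hk : 1 ≤ k) (F : Finset (Finset α)) (hsz : ∀ S ∈ F, S.card = k)
    (hvc : VCdimLE F 1) (hcard : r ^ (10 * k) ≤ F.card) :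
    HasSunflower F r := by
  refine hasSunflower_of_pow_lt_card hr k hsz hvc (lt_of_lt_of_le ?_ hcard)
  calc (r - 1) ^ k < r ^ k := Nat.pow_lt_pow_left (by omega) (by omega)
    _ ≤ r ^ (10 * k) := Nat.pow_le_pow_right (by omega) (by omega)
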